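/- Commuting conversion is computed by the μμ̃ machine: the translation of (case(c, x₁.λy.t₁, x₂.λy.t₂)) u, applied against any context α, reduces in finitely many steps to ⟨⟦c⟧ | μ̃[inj₁ x₁.⟨⟦t₁[u/y]⟧ | α⟩ | inj₂ x₂.⟨⟦t₂[u/y]⟧ | α⟩]⟩. -/

import Mathlib

mutual
/-- μμ̃ machine terms. -/
inductive MTm where
  | var : Nat → MTm
  | mu : MMach → MTm            -- μα.m, binds co-variable 0
  | muPair : MMach → MTm        -- μ(x·α).m, binds variable 0 and co-variable 0
  | injl : MTm → MTm
  | injr : MTm → MTm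
/-- μμ̃ machine co-terms (contexts). -/
inductive MCo where
  | covar : Nat → MCo
  | cons : MTm → MCo → MCo      -- t·e
  | mutilde : MMach → MCo       -- μ̃x.m, binds variable 0
  | case : MMach → MMach → MCo  -- μ̃[inj₁x₁.m₁ | inj₂x₂.m₂], each branch binds variable 0
/-- μμ̃ machine configurations ⟨t | e⟩. -/
inductive MMach where
  | conf : MTm → MCo → MMach
end

/-- Lift a renaming under a binder. -/
def liftN (f : Nat → Nat) : Nat → Nat
  | 0 => 0
  | n + 1 => f n + 1

mutual
/-- Simultaneous renaming of variables (ft) and co-variables (fc). -/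
def MTm.rename (ft fc : Nat → Nat) : MTm → MTm
  | .var n => .var (ft n)
  | .mu m => .mu (MMach.rename ft (liftN fc) m)
  | .muPair m => .muPair (MMach.rename (liftN ft) (liftN fc) m)
  | .injl t => .injl (MTm.rename ft fc t)
  | .injr t => .injr (MTm.rename ft fc t)
def MCo.rename (ft fc : Nat → Nat) : MCo → MCo
  | .covar n => .covar (fc n)
  | .cons t e => .cons (MTm.rename ft fc t) (MCo.rename ft fc e)
  | .mutilde m => .mutilde (MMach.rename (liftN ft) fc m)
  | .case m₁ m₂ => .case (MMach.rename (liftN ft) fc m₁) (MMach.rename (liftN ft) fc m₂)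
def MMach.rename (ft fc : Nat → Nat) : MMach → MMach
  | .conf t e => .conf (MTm.rename ft fc t) (MCo.rename ft fc e)
end

/-- Lift a substitution under a variable binder. -/
def upT (σt : Nat → MTm) (σc : Nat → MCo) : (Nat → MTm) × (Nat → MCo) :=
  (fun n => match n with
    | 0 => .var 0
    | n + 1 => MTm.rename Nat.succ id (σt n),
   fun n => MCo.rename Nat.succ id (σc n))

/-- Lift a substitution under a co-variable binder. -/
def upC (σt : Nat → MTm) (σc : Nat → MCo) : (Nat → MTm) × (Nat → MCo) :=
  (fun n => MTm.rename id Nat.succ (σt n),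
   fun n => match n with
    | 0 => .covar 0
    | n + 1 => MCo.rename id Nat.succ (σc n))

mutual
/-- Simultaneous substitution of terms for variables and co-terms for co-variables. -/
def MTm.subst (σt : Nat → MTm) (σc : Nat → MCo) : MTm → MTm
  | .var n => σt n
  | .mu m => .mu (MMach.subst (upC σt σc).1 (upC σt σc).2 m)
  | .muPair m =>
      .muPair (MMach.subst (upT (upC σt σc).1 (upC σt σc).2).1
                           (upT (upC σt σc).1 (upC σt σc).2).2 m)
  | .injl t => .injl (MTm.subst σt σc t)
  | .injr t => .injr (MTm.subst σt σc t)
def MCo.subst (σt : Nat → MTm) (σc : Nat → MCo) : MCo → MCo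
  | .covar n => σc n
  | .cons t e => .cons (MTm.subst σt σc t) (MCo.subst σt σc e)
  | .mutilde m => .mutilde (MMach.subst (upT σt σc).1 (upT σt σc).2 m)
  | .case m₁ m₂ => .case (MMach.subst (upT σt σc).1 (upT σt σc).2 m₁)
                         (MMach.subst (upT σt σc).1 (upT σt σc).2 m₂)
def MMach.subst (σt : Nat → MTm) (σc : Nat → MCo) : MMach → MMach
  | .conf t e => .conf (MTm.subst σt σc t) (MCo.subst σt σc e)
end

/-- m[e/α] : substitute co-term `e` for co-variable 0. -/
def MMach.substCo (m : MMach) (e : MCo) : MMach :=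
  MMach.subst MTm.var (fun n => match n with | 0 => e | n + 1 => .covar n) m

/-- m[t/x] : substitute term `t` for variable 0. -/
def MMach.substTm (m : MMach) (t : MTm) : MMach :=
  MMach.subst (fun n => match n with | 0 => t | n + 1 => .var n) MCo.covar m

/-- m[t/x, e/α] : substitute both a term and a co-term. -/
def MMach.substTmCo (m : MMach) (t : MTm) (e : MCo) : MMach :=
  MMach.subst (fun n => match n with | 0 => t | n + 1 => .var n)
              (fun n => match n with | 0 => e | n + 1 => .covar n) m

mutual
/-- Reduction of μμ̃ terms (congruence). -/
inductive StepT : MTm → MTm → Prop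
  | mu {m m'} : StepM m m' → StepT (.mu m) (.mu m')
  | muPair {m m'} : StepM m m' → StepT (.muPair m) (.muPair m')
  | injl {t t'} : StepT t t' → StepT (.injl t) (.injl t')
  | injr {t t'} : StepT t t' → StepT (.injr t) (.injr t')
/-- Reduction of μμ̃ co-terms (congruence). -/
inductive StepC : MCo → MCo → Prop
  | consl {t t'} (e) : StepT t t' → StepC (.cons t e) (.cons t' e)
  | consr (t) {e e'} : StepC e e' → StepC (.cons t e) (.cons t e')
  | mutilde {m m'} : StepM m m' → StepC (.mutilde m) (.mutilde m')
  | casel {m₁ m₁'} (m₂) : StepM m₁ m₁' → StepC (.case m₁ m₂) (.case m₁' m₂)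
  | caser (m₁) {m₂ m₂'} : StepM m₂ m₂' → StepC (.case m₁ m₂) (.case m₁ m₂')
/-- Reduction of μμ̃ machine configurations. -/
inductive StepM : MMach → MMach → Prop
  | mu (m : MMach) (e : MCo) : StepM (.conf (.mu m) e) (m.substCo e)
  | mutilde (t : MTm) (m : MMach) : StepM (.conf t (.mutilde m)) (m.substTm t)
  | muPair (m : MMach) (u : MTm) (e : MCo) :
      StepM (.conf (.muPair m) (.cons u e)) (m.substTmCo u e)
  | casel (t : MTm) (m₁ m₂ : MMach) :
      StepM (.conf (.injl t) (.case m₁ m₂)) (m₁.substTm t)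
  | caser (t : MTm) (m₁ m₂ : MMach) :
      StepM (.conf (.injr t) (.case m₁ m₂)) (m₂.substTm t)
  | congT {t t'} (e) : StepT t t' → StepM (.conf t e) (.conf t' e)
  | congC (t) {e e'} : StepC e e' → StepM (.conf t e) (.conf t e')
end

/-- Source λ-calculus with sums (de Bruijn). In `case t u₁ u₂` each branch binds
variable 0. -/
inductive LTm where
  | var : Nat → LTm
  | lam : LTm → LTm
  | app : LTm → LTm → LTm
  | injl : LTm → LTm
  | injr : LTm → LTm
  | case : LTm → LTm → LTm → LTm

/-- Compilation of λ-terms with sums into the μμ̃ machine (call-by-name). -/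
def transl : LTm → MTm
  | .var n => .var n
  | .lam t => .muPair (.conf (transl t) (.covar 0))
  | .app t u => .mu (.conf (transl t) (.cons (transl u) (.covar 0)))
  | .injl t => .injl (transl t)
  | .injr t => .injr (transl t)
  | .case t u₁ u₂ =>
      .mu (.conf (transl t)
        (.case (.conf (transl u₁) (.covar 0)) (.conf (transl u₂) (.covar 0))))

/-- Shift free λ-variables ≥ d by one. -/
def LTm.shift (d : Nat) : LTm → LTm
  | .var n => if n < d then .var n else .var (n + 1)
  | .lam t => .lam (LTm.shift (d + 1) t)
  | .app t u => .app (LTm.shift d t) (LTm.shift d u)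
  | .injl t => .injl (LTm.shift d t)
  | .injr t => .injr (LTm.shift d t)
  | .case t u₁ u₂ =>
      .case (LTm.shift d t) (LTm.shift (d + 1) u₁) (LTm.shift (d + 1) u₂)

/-- Substitute `u` for λ-variable `k`. -/
def LTm.subst (k : Nat) (u : LTm) : LTm → LTm
  | .var n => if n < k then .var n else if n = k then u else .var (n - 1)
  | .lam t => .lam (LTm.subst (k + 1) (LTm.shift 0 u) t)
  | .app t v => .app (LTm.subst k u t) (LTm.subst k u v)
  | .injl t => .injl (LTm.subst k u t)
  | .injr t => .injr (LTm.subst k u t)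
  | .case t v₁ v₂ =>
      .case (LTm.subst k u t) (LTm.subst (k + 1) (LTm.shift 0 u) v₁)
            (LTm.subst (k + 1) (LTm.shift 0 u) v₂)

/-! A translated λ-term has no free co-variables and the same free variables as the λ-term, so
machine renamings and substitutions act on `transl s` only through their variable part, where they
compute `LTm.shift` and `LTm.subst`. Hence each of the four machine steps (μ of the application,
μ of the case, μ(x·α) in each branch) lands on a translated term, and the two μ(x·α) steps perform
the β-reductions of the converted term. -/

theorem LTm.shift_subst_var (k n : Nat) (v : LTm) :
    LTm.shift 0 (LTm.subst k v (.var n)) = LTm.subst (k + 1) (LTm.shift 0 v) (.var (n + 1)) := by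
  simp only [LTm.subst]
  split_ifs <;> simp_all [LTm.shift] <;> omega

lemma rename_transl_of_id (s : LTm) {ft : Nat → Nat} (fc : Nat → Nat) (h : ∀ n, ft n = n) :
    MTm.rename ft fc (transl s) = transl s := by
  have hlift : ∀ {f : Nat → Nat}, (∀ n, f n = n) → ∀ n, liftN f n = n := by
    intro f hf n; cases n <;> simp [liftN, hf]
  induction s generalizing ft fc with
  | var n => simp [transl, MTm.rename, h]
  | lam t ih =>
    simp only [transl, MTm.rename, MMach.rename, MCo.rename, ih _ (hlift h)]
    simp [liftN]
  | app t u iht ihu =>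
    simp only [transl, MTm.rename, MMach.rename, MCo.rename, iht _ h, ihu _ h]
    simp [liftN]
  | injl t ih => simp only [transl, MTm.rename, ih _ h]
  | injr t ih => simp only [transl, MTm.rename, ih _ h]
  | case t u₁ u₂ iht ih₁ ih₂ =>
    simp only [transl, MTm.rename, MMach.rename, MCo.rename, iht _ h, ih₁ _ (hlift h),
      ih₂ _ (hlift h)]
    simp [liftN]

lemma rename_transl_of_shift (s : LTm) {d : Nat} {ft : Nat → Nat} (fc : Nat → Nat)
    (h : ∀ n, ft n = if n < d then n else n + 1) :
    MTm.rename ft fc (transl s) = transl (LTm.shift d s) := by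
  have hlift : ∀ {d : Nat} {f : Nat → Nat}, (∀ n, f n = if n < d then n else n + 1) →
      ∀ n, liftN f n = if n < d + 1 then n else n + 1 := by
    intro d f hf n
    cases n with
    | zero => simp [liftN]
    | succ n => simp only [liftN, hf]; split_ifs <;> omega
  induction s generalizing d ft fc with
  | var n => simp only [transl, MTm.rename, LTm.shift, h]; split_ifs <;> rfl
  | lam t ih =>
    simp only [transl, MTm.rename, LTm.shift, MMach.rename, MCo.rename, ih _ (hlift h)]
    simp [liftN]
  | app t u iht ihu =>
    simp only [transl, MTm.rename, LTm.shift, MMach.rename, MCo.rename, iht _ h, ihu _ h]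
    simp [liftN]
  | injl t ih => simp only [transl, MTm.rename, LTm.shift, ih _ h]
  | injr t ih => simp only [transl, MTm.rename, LTm.shift, ih _ h]
  | case t u₁ u₂ iht ih₁ ih₂ =>
    simp only [transl, MTm.rename, LTm.shift, MMach.rename, MCo.rename, iht _ h,
      ih₁ _ (hlift h), ih₂ _ (hlift h)]
    simp [liftN]

lemma rename_succ_transl (s : LTm) (fc : Nat → Nat) :
    MTm.rename Nat.succ fc (transl s) = transl (LTm.shift 0 s) :=
  rename_transl_of_shift s fc fun _ => by simp

lemma upC_fst_of_var {σt : Nat → MTm} (σc : Nat → MCo) (h : ∀ n, σt n = .var n) (n : Nat) :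
    (upC σt σc).1 n = .var n := by
  simp [upC, h, MTm.rename]

lemma upT_fst_of_var {σt : Nat → MTm} (σc : Nat → MCo) (h : ∀ n, σt n = .var n) (n : Nat) :
    (upT σt σc).1 n = .var n := by
  cases n <;> simp [upT, h, MTm.rename]

lemma subst_transl_of_var (s : LTm) {σt : Nat → MTm} (σc : Nat → MCo)
    (h : ∀ n, σt n = .var n) :
    MTm.subst σt σc (transl s) = transl s := by
  induction s generalizing σt σc with
  | var n => simp [transl, MTm.subst, h]
  | lam t ih =>
    simp only [transl, MTm.subst, MMach.subst, MCo.subst,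
      ih _ (upT_fst_of_var _ (upC_fst_of_var _ h))]
    simp [upT, upC, MCo.rename]
  | app t u iht ihu =>
    simp only [transl, MTm.subst, MMach.subst, MCo.subst, iht _ (upC_fst_of_var _ h),
      ihu _ (upC_fst_of_var _ h)]
    simp [upC]
  | injl t ih => simp only [transl, MTm.subst, ih _ h]
  | injr t ih => simp only [transl, MTm.subst, ih _ h]
  | case t u₁ u₂ iht ih₁ ih₂ =>
    simp only [transl, MTm.subst, MMach.subst, MCo.subst, iht _ (upC_fst_of_var _ h),
      ih₁ _ (upT_fst_of_var _ (upC_fst_of_var _ h)),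
      ih₂ _ (upT_fst_of_var _ (upC_fst_of_var _ h))]
    simp [upT, upC, MCo.rename]

lemma upC_fst_of_subst {σt : Nat → MTm} (σc : Nat → MCo) {k : Nat} {v : LTm}
    (h : ∀ n, σt n = transl (LTm.subst k v (.var n))) (n : Nat) :
    (upC σt σc).1 n = transl (LTm.subst k v (.var n)) := by
  simp only [upC, h]
  exact rename_transl_of_id _ _ fun _ => rfl

lemma upT_fst_of_subst {σt : Nat → MTm} (σc : Nat → MCo) {k : Nat} {v : LTm}
    (h : ∀ n, σt n = transl (LTm.subst k v (.var n))) (n : Nat) :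
    (upT σt σc).1 n = transl (LTm.subst (k + 1) (LTm.shift 0 v) (.var n)) := by
  cases n with
  | zero => simp [upT, LTm.subst, transl]
  | succ n => simp only [upT, h, rename_succ_transl, LTm.shift_subst_var]

lemma subst_transl_of_subst (s : LTm) {σt : Nat → MTm} (σc : Nat → MCo) {k : Nat} {v : LTm}
    (h : ∀ n, σt n = transl (LTm.subst k v (.var n))) :
    MTm.subst σt σc (transl s) = transl (LTm.subst k v s) := by
  induction s generalizing k v σt σc with
  | var n => exact h n
  | lam t ih =>
    simp only [transl, MTm.subst, MMach.subst, MCo.subst, LTm.subst,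
      ih _ (upT_fst_of_subst _ (upC_fst_of_subst _ h))]
    simp [upT, upC, MCo.rename]
  | app t u iht ihu =>
    simp only [transl, MTm.subst, MMach.subst, MCo.subst, LTm.subst,
      iht _ (upC_fst_of_subst _ h), ihu _ (upC_fst_of_subst _ h)]
    simp [upC]
  | injl t ih => simp only [transl, MTm.subst, LTm.subst, ih _ h]
  | injr t ih => simp only [transl, MTm.subst, LTm.subst, ih _ h]
  | case t u₁ u₂ iht ih₁ ih₂ =>
    simp only [transl, MTm.subst, MMach.subst, MCo.subst, LTm.subst,
      iht _ (upC_fst_of_subst _ h), ih₁ _ (upT_fst_of_subst _ (upC_fst_of_subst _ h)),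
      ih₂ _ (upT_fst_of_subst _ (upC_fst_of_subst _ h))]
    simp [upT, upC, MCo.rename]

theorem StepM.transl_app (t u : LTm) (e : MCo) :
    StepM (.conf (transl (.app t u)) e) (.conf (transl t) (.cons (transl u) e)) := by
  have h : (MMach.conf (transl t) (.cons (transl u) (.covar 0))).substCo e =
      .conf (transl t) (.cons (transl u) e) := by
    simp only [MMach.substCo, MMach.subst, MCo.subst, subst_transl_of_var _ _ fun _ => rfl]
  exact h ▸ StepM.mu _ e

theorem StepM.transl_case (c u₁ u₂ : LTm) (e : MCo) :
    StepM (.conf (transl (.case c u₁ u₂)) e)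
      (.conf (transl c) (.case (.conf (transl u₁) (MCo.rename Nat.succ id e))
        (.conf (transl u₂) (MCo.rename Nat.succ id e)))) := by
  have h : (MMach.conf (transl c)
      (.case (.conf (transl u₁) (.covar 0)) (.conf (transl u₂) (.covar 0)))).substCo e =
      .conf (transl c) (.case (.conf (transl u₁) (MCo.rename Nat.succ id e))
        (.conf (transl u₂) (MCo.rename Nat.succ id e))) := by
    simp only [MMach.substCo, MMach.subst, MCo.subst, subst_transl_of_var _ _ fun _ => rfl,
      subst_transl_of_var _ _ (upT_fst_of_var (σt := MTm.var) _ fun _ => rfl)]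
    simp [upT]
  exact h ▸ StepM.mu _ e

theorem StepM.transl_lam (t v : LTm) (e : MCo) :
    StepM (.conf (transl (.lam t)) (.cons (transl v) e))
      (.conf (transl (LTm.subst 0 v t)) e) := by
  have h : (MMach.conf (transl t) (.covar 0)).substTmCo (transl v) e =
      .conf (transl (LTm.subst 0 v t)) e := by
    simp only [MMach.substTmCo, MMach.subst, MCo.subst]
    rw [subst_transl_of_subst t _ (k := 0) (v := v)
      fun n => by cases n <;> simp [LTm.subst, transl]]
  exact h ▸ StepM.muPair _ _ e

/-- Commuting conversion is computed by the μμ̃ machine: the translation of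
(case(c, x₁.λy.t₁, x₂.λy.t₂)) u against a co-variable α reduces in finitely
many steps to ⟨⟦c⟧ | μ̃[inj₁ x₁.⟨⟦t₁[u/y]⟧ | α⟩ | inj₂ x₂.⟨⟦t₂[u/y]⟧ | α⟩]⟩. -/
theorem commuting_conversion (c t₁ t₂ u : LTm) (k : Nat) :
    Relation.ReflTransGen StepM
      (.conf (transl (.app (.case c (.lam t₁) (.lam t₂)) u)) (.covar k))
      (.conf (transl c)
        (.case (.conf (transl (LTm.subst 0 (LTm.shift 0 u) t₁)) (.covar k))
               (.conf (transl (LTm.subst 0 (LTm.shift 0 u) t₂)) (.covar k)))) := by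
  have hshift : MCo.rename Nat.succ id (.cons (transl u) (.covar k)) =
      .cons (transl (LTm.shift 0 u)) (.covar k) := by
    simp [MCo.rename, rename_succ_transl]
  have hcase := StepM.transl_case c (.lam t₁) (.lam t₂) (.cons (transl u) (.covar k))
  rw [hshift] at hcase
  exact .head (StepM.transl_app _ u _) <| .head hcase <|
    .head (.congC _ (.casel _ (StepM.transl_lam t₁ _ _))) <|
    .single (.congC _ (.caser _ (StepM.transl_lam t₂ _ _)))
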